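/- Every entwined module M is a right #(C,A)-module via m·f := m₀ f(m₁). If there exists Λ ∈ Q' with Λ(x) = 1_A, then for every entwined module M the #(C,A)-invariants coincide with the coinvariants: {m ∈ M | m₀ f(m₁) = m·f(x) for all f ∈ Hom_k(C,A)} = {m ∈ M | ρ(m) = m ⊗ x}. In particular, taking M = A, the set {a ∈ A | a_ψ f(x^ψ) = a·f(x) for all f} equals B'. -/
import Mathlib


open TensorProduct

noncomputable section

variable {k A C : Type*} [CommRing k] [Ring A] [Algebra k A]
  [AddCommGroup C] [Module k C] [Coalgebra k C]

/-- An entwining structure `(A, C, ψ)`. -/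
structure IsEntwining (k : Type*) {A C : Type*} [CommRing k] [Ring A] [Algebra k A]
    [AddCommGroup C] [Module k C] [Coalgebra k C]
    (ψ : C ⊗[k] A →ₗ[k] A ⊗[k] C) : Prop where
  mul_compat : ψ ∘ₗ LinearMap.lTensor C (LinearMap.mul' k A) =
    LinearMap.rTensor C (LinearMap.mul' k A) ∘ₗ (TensorProduct.assoc k A A C).symm.toLinearMap ∘ₗ
      LinearMap.lTensor A ψ ∘ₗ (TensorProduct.assoc k A C A).toLinearMap ∘ₗ
      LinearMap.rTensor A ψ ∘ₗ (TensorProduct.assoc k C A A).symm.toLinearMap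
  one_compat : ∀ c : C, ψ (c ⊗ₜ[k] 1) = 1 ⊗ₜ[k] c
  comul_compat : LinearMap.lTensor A Coalgebra.comul ∘ₗ ψ =
    (TensorProduct.assoc k A C C).toLinearMap ∘ₗ LinearMap.rTensor C ψ ∘ₗ
      (TensorProduct.assoc k C A C).symm.toLinearMap ∘ₗ LinearMap.lTensor C ψ ∘ₗ
      (TensorProduct.assoc k C C A).toLinearMap ∘ₗ LinearMap.rTensor A Coalgebra.comul
  counit_compat : ∀ (c : C) (a : A),
    TensorProduct.rid k A (LinearMap.lTensor A Coalgebra.counit (ψ (c ⊗ₜ[k] a))) =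
      (Coalgebra.counit (R := k) c) • a

/-- The smash product multiplication on `Hom_k(C,A)`: `(f # g)(c) = f(c₂)_ψ g((c₁)^ψ)`. -/
def smashMul (ψ : C ⊗[k] A →ₗ[k] A ⊗[k] C) (f g : C →ₗ[k] A) : C →ₗ[k] A :=
  LinearMap.mul' k A ∘ₗ LinearMap.lTensor A g ∘ₗ ψ ∘ₗ LinearMap.lTensor C f ∘ₗ Coalgebra.comul

/-- The unit of `#(C,A)`: `c ↦ ε(c) 1_A`. -/
def smashOne (k : Type*) (A C : Type*) [CommRing k] [Ring A] [Algebra k A]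
    [AddCommGroup C] [Module k C] [Coalgebra k C] : C →ₗ[k] A :=
  Algebra.linearMap k A ∘ₗ Coalgebra.counit

/-- The ring morphism `i : A → #(C,A)`, `i(a)(c) = ε(c) a`. -/
def smashIota (k : Type*) {A : Type*} (C : Type*) [CommRing k] [Ring A] [Algebra k A]
    [AddCommGroup C] [Module k C] [Coalgebra k C] (a : A) : C →ₗ[k] A :=
  (Coalgebra.counit : C →ₗ[k] k).smulRight a


/-- `q ∈ Q'` iff `q(c₂)_ψ ⊗ (c₁)^ψ = q(c) ⊗ x` for all `c`. -/
def QprimeCond (ψ : C ⊗[k] A →ₗ[k] A ⊗[k] C) (x : C) (q : C →ₗ[k] A) : Prop :=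
  ∀ c : C, ψ (LinearMap.lTensor C q (Coalgebra.comul c)) = q c ⊗ₜ[k] x

variable {M : Type*} [AddCommGroup M] [Module k M]

/-- For a right `A`-module `(M, sm)` and `a : A`, the map
`M ⊗ C → M ⊗ C`, `m ⊗ c ↦ (m · a_ψ) ⊗ c^ψ`. -/
def entTheta (ψ : C ⊗[k] A →ₗ[k] A ⊗[k] C) (sm : M →ₗ[k] A →ₗ[k] M) (a : A) :
    M ⊗[k] C →ₗ[k] M ⊗[k] C :=
  LinearMap.rTensor C (TensorProduct.lift sm) ∘ₗ
    (TensorProduct.assoc k M A C).symm.toLinearMap ∘ₗ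
    LinearMap.lTensor M (ψ ∘ₗ (TensorProduct.mk k C A).flip a)

/-- The right `#(C,A)`-action on an entwined module: `m · f = m₀ · f(m₁)`. -/
def smashAct (sm : M →ₗ[k] A →ₗ[k] M) (ρM : M →ₗ[k] M ⊗[k] C)
    (m : M) (f : C →ₗ[k] A) : M :=
  TensorProduct.lift sm (LinearMap.lTensor M f (ρM m))


section Aux

variable {N : Type*} [AddCommGroup N] [Module k N]

lemma aux_one (sm : N →ₗ[k] A →ₗ[k] N) (hsm1 : ∀ m : N, sm m 1 = m)
    (t : N ⊗[k] C) :
    TensorProduct.lift sm (LinearMap.lTensor N (smashOne k A C) t) =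
      TensorProduct.rid k N (LinearMap.lTensor N Coalgebra.counit t) := by
  induction t using TensorProduct.induction_on with
  | zero => simp
  | tmul n c =>
      simp [smashOne, Algebra.algebraMap_eq_smul_one, hsm1]
  | add s t hs ht => simp only [map_add, hs, ht]

lemma aux_star (sm : N →ₗ[k] A →ₗ[k] N)
    (hsm2 : ∀ (m : N) (a b : A), sm m (a * b) = sm (sm m a) b)
    (g : C →ₗ[k] A) (u : N ⊗[k] (A ⊗[k] C)) :
    TensorProduct.lift sm (LinearMap.lTensor N (LinearMap.mul' k A ∘ₗ LinearMap.lTensor A g) u) =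
      TensorProduct.lift sm (LinearMap.lTensor N g
        (LinearMap.rTensor C (TensorProduct.lift sm) ((TensorProduct.assoc k N A C).symm u))) := by
  induction u using TensorProduct.induction_on with
  | zero => simp
  | tmul n w =>
      induction w using TensorProduct.induction_on with
      | zero => simp
      | tmul a c => simp [hsm2]
      | add w1 w2 h1 h2 =>
          simp only [TensorProduct.tmul_add, map_add] at *
          rw [h1, h2]
  | add u1 u2 h1 h2 => simp only [map_add, h1, h2]

lemma aux_step1 (ψ : C ⊗[k] A →ₗ[k] A ⊗[k] C)
    (sm : N →ₗ[k] A →ₗ[k] N) (ρM : N →ₗ[k] N ⊗[k] C)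
    (hent : ∀ (m : N) (a : A), ρM (sm m a) = entTheta ψ sm a (ρM m))
    (f : C →ₗ[k] A) (t : N ⊗[k] C) :
    ρM (TensorProduct.lift sm (LinearMap.lTensor N f t)) =
      LinearMap.rTensor C (TensorProduct.lift sm) ((TensorProduct.assoc k N A C).symm
        (LinearMap.lTensor N (ψ ∘ₗ LinearMap.lTensor C f)
          (TensorProduct.assoc k N C C (LinearMap.rTensor C ρM t)))) := by
  induction t using TensorProduct.induction_on with
  | zero => simp
  | tmul n c =>
      rw [LinearMap.lTensor_tmul, TensorProduct.lift.tmul, hent, LinearMap.rTensor_tmul]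
      generalize ρM n = s
      induction s using TensorProduct.induction_on with
      | zero => simp [entTheta]
      | tmul n0 c1 => simp [entTheta]
      | add s1 s2 h1 h2 =>
          simp only [map_add, TensorProduct.add_tmul, h1, h2]
  | add t1 t2 h1 h2 => simp only [map_add, h1, h2]

lemma aux_q (ψ : C ⊗[k] A →ₗ[k] A ⊗[k] C) (x : C) (Λ : C →ₗ[k] A)
    (hΛ : QprimeCond ψ x Λ) (sm : N →ₗ[k] A →ₗ[k] N) (t : N ⊗[k] C) :
    LinearMap.rTensor C (TensorProduct.lift sm) ((TensorProduct.assoc k N A C).symm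
      (LinearMap.lTensor N (ψ ∘ₗ LinearMap.lTensor C Λ)
        (LinearMap.lTensor N Coalgebra.comul t))) =
      TensorProduct.lift sm (LinearMap.lTensor N Λ t) ⊗ₜ[k] x := by
  induction t using TensorProduct.induction_on with
  | zero => simp
  | tmul n c => simp [hΛ c]
  | add t1 t2 h1 h2 => simp only [map_add, TensorProduct.add_tmul, h1, h2]

lemma aux_assoc (ψ : C ⊗[k] A →ₗ[k] A ⊗[k] C)
    (sm : N →ₗ[k] A →ₗ[k] N)
    (hsm2 : ∀ (m : N) (a b : A), sm m (a * b) = sm (sm m a) b)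
    (ρM : N →ₗ[k] N ⊗[k] C)
    (hcoassoc : ∀ m : N, TensorProduct.assoc k N C C
        (LinearMap.rTensor C ρM (ρM m)) = LinearMap.lTensor N Coalgebra.comul (ρM m))
    (hent : ∀ (m : N) (a : A), ρM (sm m a) = entTheta ψ sm a (ρM m))
    (m : N) (f g : C →ₗ[k] A) :
    smashAct sm ρM m (smashMul ψ f g) = smashAct sm ρM (smashAct sm ρM m f) g := by
  rw [smashAct, smashAct, smashAct, aux_step1 ψ sm ρM hent f (ρM m), hcoassoc,
    ← aux_star sm hsm2 g]
  simp only [smashMul, LinearMap.lTensor_comp, LinearMap.comp_apply]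

lemma aux_inv (ψ : C ⊗[k] A →ₗ[k] A ⊗[k] C) (x : C)
    (Λ : C →ₗ[k] A) (hΛ : QprimeCond ψ x Λ) (hΛx : Λ x = 1)
    (sm : N →ₗ[k] A →ₗ[k] N) (hsm1 : ∀ m : N, sm m 1 = m)
    (ρM : N →ₗ[k] N ⊗[k] C)
    (hcoassoc : ∀ m : N, TensorProduct.assoc k N C C
        (LinearMap.rTensor C ρM (ρM m)) = LinearMap.lTensor N Coalgebra.comul (ρM m))
    (hent : ∀ (m : N) (a : A), ρM (sm m a) = entTheta ψ sm a (ρM m)) :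
    {m : N | ∀ f : C →ₗ[k] A, smashAct sm ρM m f = sm m (f x)} =
      {m : N | ρM m = m ⊗ₜ[k] x} := by
  ext m
  simp only [Set.mem_setOf_eq]
  constructor
  · intro h
    have hm : TensorProduct.lift sm (LinearMap.lTensor N Λ (ρM m)) = m := by
      have h2 := h Λ
      rw [smashAct] at h2
      rw [h2, hΛx, hsm1]
    conv_lhs => rw [← hm]
    rw [aux_step1 ψ sm ρM hent Λ (ρM m), hcoassoc, aux_q ψ x Λ hΛ sm, hm]
  · intro h f
    rw [smashAct, h]
    simp

end Aux


set_option linter.unusedSectionVars false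

lemma auxA_rtensor (ψ : C ⊗[k] A →ₗ[k] A ⊗[k] C) (x : C) (s : A ⊗[k] C) :
    LinearMap.rTensor C (ψ ∘ₗ TensorProduct.mk k C A x) s =
      LinearMap.rTensor C ψ ((TensorProduct.assoc k C A C).symm (x ⊗ₜ[k] s)) := by
  induction s using TensorProduct.induction_on with
  | zero => simp
  | tmul a c => simp
  | add s1 s2 h1 h2 => simp only [map_add, TensorProduct.tmul_add, h1, h2]

lemma auxA_coassoc (ψ : C ⊗[k] A →ₗ[k] A ⊗[k] C) (hψ : IsEntwining k ψ)
    (x : C) (hx1 : Coalgebra.comul (R := k) x = x ⊗ₜ[k] x) (a : A) :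
    TensorProduct.assoc k A C C
        (LinearMap.rTensor C (ψ ∘ₗ TensorProduct.mk k C A x) (ψ (x ⊗ₜ[k] a))) =
      LinearMap.lTensor A Coalgebra.comul (ψ (x ⊗ₜ[k] a)) := by
  have h := LinearMap.congr_fun hψ.comul_compat (x ⊗ₜ[k] a)
  simp only [LinearMap.comp_apply, LinearEquiv.coe_coe, LinearMap.rTensor_tmul, hx1,
    TensorProduct.assoc_tmul, LinearMap.lTensor_tmul] at h
  rw [auxA_rtensor, h]

lemma auxA_theta (ψ : C ⊗[k] A →ₗ[k] A ⊗[k] C) (b : A) (s : A ⊗[k] C) :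
    entTheta ψ (LinearMap.mul k A) b s =
      LinearMap.rTensor C (LinearMap.mul' k A) ((TensorProduct.assoc k A A C).symm
        (LinearMap.lTensor A ψ (TensorProduct.assoc k A C A (s ⊗ₜ[k] b)))) := by
  induction s using TensorProduct.induction_on with
  | zero => simp [entTheta]
  | tmul a c =>
      simp only [entTheta, LinearMap.comp_apply, LinearEquiv.coe_coe,
        LinearMap.lTensor_tmul, TensorProduct.assoc_tmul, LinearMap.flip_apply,
        TensorProduct.mk_apply]
      rfl
  | add s1 s2 h1 h2 => simp only [map_add, TensorProduct.add_tmul, h1, h2]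

lemma auxA_ent (ψ : C ⊗[k] A →ₗ[k] A ⊗[k] C) (hψ : IsEntwining k ψ)
    (x : C) (a b : A) :
    ψ (x ⊗ₜ[k] (a * b)) = entTheta ψ (LinearMap.mul k A) b (ψ (x ⊗ₜ[k] a)) := by
  have h := LinearMap.congr_fun hψ.mul_compat (x ⊗ₜ[k] (a ⊗ₜ[k] b))
  simp only [LinearMap.comp_apply, LinearEquiv.coe_coe, LinearMap.lTensor_tmul,
    LinearMap.mul'_apply, TensorProduct.assoc_symm_tmul, LinearMap.rTensor_tmul] at h
  rw [h, auxA_theta]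

/-- Every entwined module is a right `#(C,A)`-module via `m · f = m₀ f(m₁)`; and if
there exists `Λ ∈ Q'` with `Λ(x) = 1`, then the `#(C,A)`-invariants coincide with
the `C`-coinvariants (in particular, for `M = A`, they equal `B'`). -/
theorem invariants_eq_coinvariants (ψ : C ⊗[k] A →ₗ[k] A ⊗[k] C) (hψ : IsEntwining k ψ)
    (x : C) (hx1 : Coalgebra.comul (R := k) x = x ⊗ₜ[k] x)
    (hx2 : Coalgebra.counit (R := k) x = (1 : k))
    -- M is a right A-module …
    (sm : M →ₗ[k] A →ₗ[k] M)
    (hsm1 : ∀ m : M, sm m 1 = m)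
    (hsm2 : ∀ (m : M) (a b : A), sm m (a * b) = sm (sm m a) b)
    -- … with a coassociative counital C-coaction …
    (ρM : M →ₗ[k] M ⊗[k] C)
    (hcoassoc : ∀ m : M, TensorProduct.assoc k M C C
        (LinearMap.rTensor C ρM (ρM m)) = LinearMap.lTensor M Coalgebra.comul (ρM m))
    (hcounit : ∀ m : M, TensorProduct.rid k M
        (LinearMap.lTensor M Coalgebra.counit (ρM m)) = m)
    -- … which is entwined: ρ(m·a) = m₀ · a_ψ ⊗ (m₁)^ψ
    (hent : ∀ (m : M) (a : A), ρM (sm m a) = entTheta ψ sm a (ρM m)) :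
    -- M is a right #(C,A)-module
    (∀ (m : M) (f g : C →ₗ[k] A),
      smashAct sm ρM m (smashMul ψ f g) = smashAct sm ρM (smashAct sm ρM m f) g) ∧
    (∀ m : M, smashAct sm ρM m (smashOne k A C) = m) ∧
    -- if Λ ∈ Q' with Λ(x) = 1 exists, invariants = coinvariants
    ((∃ Λ : C →ₗ[k] A, QprimeCond ψ x Λ ∧ Λ x = 1) →
      ({m : M | ∀ f : C →ₗ[k] A, smashAct sm ρM m f = sm m (f x)} =
        {m : M | ρM m = m ⊗ₜ[k] x}) ∧
      -- in particular, for M = A : invariants of A = B'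
      ({a : A | ∀ f : C →ₗ[k] A,
          LinearMap.mul' k A (LinearMap.lTensor A f (ψ (x ⊗ₜ[k] a))) = a * f x} =
        {a : A | ψ (x ⊗ₜ[k] a) = a ⊗ₜ[k] x})) := by
  refine ⟨fun m f g => aux_assoc ψ sm hsm2 ρM hcoassoc hent m f g, fun m => ?_,
    fun ⟨Λ, hΛ, hΛx⟩ => ⟨aux_inv ψ x Λ hΛ hΛx sm hsm1 ρM hcoassoc hent, ?_⟩⟩
  · rw [smashAct, aux_one sm hsm1, hcounit]
  · have key := aux_inv (N := A) ψ x Λ hΛ hΛx (LinearMap.mul k A)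
      (fun a => mul_one a) (ψ ∘ₗ TensorProduct.mk k C A x)
      (fun a => auxA_coassoc ψ hψ x hx1 a)
      (fun a b => auxA_ent ψ hψ x a b)
    exact key

end
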